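/- arXiv:1209.1014 — 3 statements merged into one kernel-verified Lean document; each statement's English description precedes it below -/
import Mathlib

section
/- The map Λ ↦ (id ⊗ Λ)(P̃⁺) is a bijection between completely positive trace-preserving maps Λ : M_n(ℂ) → M_m(ℂ) and operators π on ℂ^n ⊗ ℂ^m satisfying π ≥ 0 and Tr_B(π) = I_n, with inverse π ↦ (ρ ↦ Tr_A[π (ρ^T ⊗ I_m)]). -/
open Matrix
open scoped Kronecker ComplexOrder

noncomputable section

/-- Partial trace over the second tensor factor. -/
def trB {n m : ℕ} (π : Matrix (Fin n × Fin m) (Fin n × Fin m) ℂ) :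
    Matrix (Fin n) (Fin n) ℂ :=
  Matrix.of fun i j => ∑ a : Fin m, π (i, a) (j, a)

/-- Partial trace over the first tensor factor. -/
def trA {n m : ℕ} (π : Matrix (Fin n × Fin m) (Fin n × Fin m) ℂ) :
    Matrix (Fin m) (Fin m) ℂ :=
  Matrix.of fun a b => ∑ i : Fin n, π (i, a) (i, b)

/-- The action of `id_k ⊗ Λ` on `M_k ⊗ M_n`. -/
def matMap {k n m : ℕ}
    (Λ : Matrix (Fin n) (Fin n) ℂ →ₗ[ℂ] Matrix (Fin m) (Fin m) ℂ)
    (X : Matrix (Fin k × Fin n) (Fin k × Fin n) ℂ) :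
    Matrix (Fin k × Fin m) (Fin k × Fin m) ℂ :=
  Matrix.of fun p q => Λ (Matrix.of fun i j => X (p.1, i) (q.1, j)) p.2 q.2

/-- Complete positivity: `id_k ⊗ Λ` preserves positive semidefiniteness for all `k`. -/
def IsCP {n m : ℕ} (Λ : Matrix (Fin n) (Fin n) ℂ →ₗ[ℂ] Matrix (Fin m) (Fin m) ℂ) : Prop :=
  ∀ k : ℕ, ∀ X : Matrix (Fin k × Fin n) (Fin k × Fin n) ℂ,
    X.PosSemidef → (matMap Λ X).PosSemidef

/-- Trace preservation. -/
def IsTP {n m : ℕ} (Λ : Matrix (Fin n) (Fin n) ℂ →ₗ[ℂ] Matrix (Fin m) (Fin m) ℂ) : Prop :=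
  ∀ X, (Λ X).trace = X.trace

/-- The Choi operator `π = Σ_{i,j} E_{ij} ⊗ Λ(E_{ij})`. -/
def choi {n m : ℕ} (Λ : Matrix (Fin n) (Fin n) ℂ →ₗ[ℂ] Matrix (Fin m) (Fin m) ℂ) :
    Matrix (Fin n × Fin m) (Fin n × Fin m) ℂ :=
  ∑ i : Fin n, ∑ j : Fin n,
    Matrix.single i j (1 : ℂ) ⊗ₖ Λ (Matrix.single i j 1)

/-!
`choi Λ` is `(id ⊗ Λ)(P̃⁺)` with `P̃⁺ = ψψ*` positive, so it is positive when `Λ` is CP; its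
`(i, j)` block is `Λ(E_ij)`, so `Tr_B (choi Λ)` has entries `Tr Λ(E_ij) = δ_ij` when `Λ` is TP.
Because the blocks of `choi Λ` are the images of the matrix units, `Λ` is recovered from them by
linearity, which is the map `ofChoi`. Conversely, a positive `π` is a sum of rank-one matrices
`v v*`, and `ofChoi (v v*)` is the Kraus map `ρ ↦ K ρ K*` where `K` is `v` reshaped into an
`m × n` matrix; such a map is CP because `(id ⊗ K · K*)(X) = (1 ⊗ K) X (1 ⊗ K)*`. Finally
`Tr (ofChoi π ρ) = Tr ((Tr_B π)ᵀ ρ)`, so `ofChoi π` is TP exactly when `Tr_B π = 1`.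
-/

section ofChoi

variable {ι κ : Type*} [Fintype ι]

def ofChoi : Matrix (ι × κ) (ι × κ) ℂ →ₗ[ℂ] Matrix ι ι ℂ →ₗ[ℂ] Matrix κ κ ℂ :=
  LinearMap.mk₂ ℂ (fun π ρ => Matrix.of fun a b => ∑ i, ∑ j, π (i, a) (j, b) * ρ i j)
    (fun _ _ _ => by
      ext; simp only [Matrix.add_apply, of_apply, add_mul, Finset.sum_add_distrib])
    (fun _ _ _ => by
      ext; simp only [Matrix.smul_apply, of_apply, smul_eq_mul, mul_assoc, Finset.mul_sum])
    (fun _ _ _ => by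
      ext; simp only [Matrix.add_apply, of_apply, mul_add, Finset.sum_add_distrib])
    (fun _ _ _ => by
      ext; simp only [Matrix.smul_apply, of_apply, smul_eq_mul, mul_left_comm, Finset.mul_sum])

lemma ofChoi_apply (π : Matrix (ι × κ) (ι × κ) ℂ) (ρ : Matrix ι ι ℂ) (a b : κ) :
    ofChoi π ρ a b = ∑ i, ∑ j, π (i, a) (j, b) * ρ i j :=
  rfl

lemma ofChoi_single [DecidableEq ι] (π : Matrix (ι × κ) (ι × κ) ℂ) (i j : ι) (c : ℂ)
    (a b : κ) : ofChoi π (single i j c) a b = π (i, a) (j, b) * c := by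
  simp [ofChoi_apply, single_apply, ite_and]

def conjMap (K : Matrix κ ι ℂ) : Matrix ι ι ℂ →ₗ[ℂ] Matrix κ κ ℂ where
  toFun ρ := K * ρ * Kᴴ
  map_add' _ _ := by rw [Matrix.mul_add, Matrix.add_mul]
  map_smul' _ _ := by rw [Matrix.mul_smul, Matrix.smul_mul, RingHom.id_apply]

lemma ofChoi_vecMulVec (v : ι × κ → ℂ) :
    ofChoi (vecMulVec v (star v)) = conjMap (Matrix.of fun a i => v (i, a)) := by
  ext ρ a b
  simp only [ofChoi_apply, conjMap, LinearMap.coe_mk, AddHom.coe_mk, mul_apply,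
    conjTranspose_apply, vecMulVec_apply, of_apply, Pi.star_apply, Finset.sum_mul]
  rw [Finset.sum_comm]
  exact Finset.sum_congr rfl fun _ _ => Finset.sum_congr rfl fun _ _ => by ring

end ofChoi

section

variable {n m : ℕ}

lemma matMap_sum {k : ℕ} {ι : Type*} (s : Finset ι)
    (Λ : ι → Matrix (Fin n) (Fin n) ℂ →ₗ[ℂ] Matrix (Fin m) (Fin m) ℂ)
    (X : Matrix (Fin k × Fin n) (Fin k × Fin n) ℂ) :
    matMap (∑ r ∈ s, Λ r) X = ∑ r ∈ s, matMap (Λ r) X := by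
  ext p q
  simp only [matMap, of_apply, LinearMap.coe_sum, Finset.sum_apply, Matrix.sum_apply]

lemma isCP_sum {ι : Type*} (s : Finset ι)
    (Λ : ι → Matrix (Fin n) (Fin n) ℂ →ₗ[ℂ] Matrix (Fin m) (Fin m) ℂ)
    (h : ∀ r ∈ s, IsCP (Λ r)) : IsCP (∑ r ∈ s, Λ r) := fun k X hX => by
  rw [matMap_sum]
  exact posSemidef_sum s fun r hr => h r hr k X hX

lemma matMap_conjMap {k : ℕ} (K : Matrix (Fin m) (Fin n) ℂ)
    (X : Matrix (Fin k × Fin n) (Fin k × Fin n) ℂ) :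
    matMap (conjMap K) X =
      ((1 : Matrix (Fin k) (Fin k) ℂ) ⊗ₖ K) * X * ((1 : Matrix (Fin k) (Fin k) ℂ) ⊗ₖ K)ᴴ := by
  ext ⟨c, a⟩ ⟨d, b⟩
  simp [matMap, conjMap, mul_apply, Fintype.sum_prod_type, one_apply, ite_mul,
    apply_ite (starRingEnd ℂ), Finset.sum_mul]

lemma isCP_conjMap (K : Matrix (Fin m) (Fin n) ℂ) : IsCP (conjMap K) := fun _ _ hX => by
  rw [matMap_conjMap]
  exact hX.mul_mul_conjTranspose_same _

lemma isCP_ofChoi {π : Matrix (Fin n × Fin m) (Fin n × Fin m) ℂ} (hπ : π.PosSemidef) :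
    IsCP (ofChoi π) := by
  obtain ⟨r, v, rfl⟩ := posSemidef_iff_eq_sum_vecMulVec.mp hπ
  rw [map_sum]
  exact isCP_sum _ _ fun i _ => ofChoi_vecMulVec (v i) ▸ isCP_conjMap _

lemma trace_ofChoi (π : Matrix (Fin n × Fin m) (Fin n × Fin m) ℂ)
    (ρ : Matrix (Fin n) (Fin n) ℂ) : (ofChoi π ρ).trace = ((trB π)ᵀ * ρ).trace := by
  simp only [trace, diag, ofChoi_apply, mul_apply, transpose_apply, trB, of_apply,
    Finset.sum_mul]
  conv_rhs => rw [Finset.sum_comm]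
  exact Finset.sum_comm_cycle.symm

lemma isTP_ofChoi {π : Matrix (Fin n × Fin m) (Fin n × Fin m) ℂ} (hπ : trB π = 1) :
    IsTP (ofChoi π) := fun ρ => by
  rw [trace_ofChoi, hπ, transpose_one, one_mul]

lemma trA_mul_transpose_kronecker_one (π : Matrix (Fin n × Fin m) (Fin n × Fin m) ℂ)
    (ρ : Matrix (Fin n) (Fin n) ℂ) :
    trA (π * (ρᵀ ⊗ₖ (1 : Matrix (Fin m) (Fin m) ℂ))) = ofChoi π ρ := by
  ext a b
  simp [trA, ofChoi_apply, mul_apply, Fintype.sum_prod_type, one_apply]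

lemma choi_apply (Λ : Matrix (Fin n) (Fin n) ℂ →ₗ[ℂ] Matrix (Fin m) (Fin m) ℂ)
    (i j : Fin n) (a b : Fin m) : choi Λ (i, a) (j, b) = Λ (single i j 1) a b := by
  simp [choi, Matrix.sum_apply, single_apply, ite_and]

lemma choi_ofChoi (π : Matrix (Fin n × Fin m) (Fin n × Fin m) ℂ) : choi (ofChoi π) = π := by
  ext ⟨i, a⟩ ⟨j, b⟩
  rw [choi_apply, ofChoi_single, mul_one]

lemma ofChoi_choi (Λ : Matrix (Fin n) (Fin n) ℂ →ₗ[ℂ] Matrix (Fin m) (Fin m) ℂ) :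
    ofChoi (choi Λ) = Λ := by
  refine ext_linearMap ℂ fun i j => LinearMap.ext fun c => ?_
  ext a b
  have hc : single i j c = c • single i j (1 : ℂ) := by rw [smul_single, smul_eq_mul, mul_one]
  simp only [LinearMap.comp_apply, singleLinearMap_apply, ofChoi_single, choi_apply]
  rw [hc, map_smul, Matrix.smul_apply, smul_eq_mul, mul_comm]

/-- The vector `ψ = Σᵢ eᵢ ⊗ eᵢ`, with `P̃⁺ = ψψ*`. -/
def maxEntangledVec (n : ℕ) : Fin n × Fin n → ℂ := fun p => if p.1 = p.2 then 1 else 0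

lemma choi_eq_matMap (Λ : Matrix (Fin n) (Fin n) ℂ →ₗ[ℂ] Matrix (Fin m) (Fin m) ℂ) :
    choi Λ = matMap Λ (vecMulVec (maxEntangledVec n) (star (maxEntangledVec n))) := by
  ext ⟨i, a⟩ ⟨j, b⟩
  have hψ : single i j (1 : ℂ) =
      of fun k l => vecMulVec (maxEntangledVec n) (star (maxEntangledVec n)) (i, k) (j, l) := by
    ext k l
    simp only [maxEntangledVec, vecMulVec_apply, single_apply, of_apply, Pi.star_apply]
    split_ifs <;> simp_all
  rw [choi_apply, hψ]
  rfl

lemma posSemidef_choi {Λ : Matrix (Fin n) (Fin n) ℂ →ₗ[ℂ] Matrix (Fin m) (Fin m) ℂ}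
    (hΛ : IsCP Λ) : (choi Λ).PosSemidef := by
  rw [choi_eq_matMap]
  exact hΛ n _ (posSemidef_vecMulVec_self_star _)

lemma trB_choi {Λ : Matrix (Fin n) (Fin n) ℂ →ₗ[ℂ] Matrix (Fin m) (Fin m) ℂ}
    (hΛ : IsTP Λ) : trB (choi Λ) = 1 := by
  ext i j
  simp only [trB, of_apply, choi_apply]
  change (Λ (single i j 1)).trace = _
  rw [hΛ, one_apply]
  split_ifs with h
  · rw [h, trace_single_eq_same]
  · exact trace_single_eq_of_ne _ _ _ h

end

/-- the Choi map is a bijection between CPTP maps and quantum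
conditional probability operators, with inverse `π ↦ (ρ ↦ Tr_A[π (ρᵀ ⊗ I)])`. -/
theorem choi_bijection {n m : ℕ} :
    (∀ Λ : Matrix (Fin n) (Fin n) ℂ →ₗ[ℂ] Matrix (Fin m) (Fin m) ℂ,
        IsCP Λ → IsTP Λ → (choi Λ).PosSemidef ∧ trB (choi Λ) = 1) ∧
    (∀ π : Matrix (Fin n × Fin m) (Fin n × Fin m) ℂ, π.PosSemidef → trB π = 1 →
        ∃! Λ : Matrix (Fin n) (Fin n) ℂ →ₗ[ℂ] Matrix (Fin m) (Fin m) ℂ,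
          (IsCP Λ ∧ IsTP Λ) ∧ choi Λ = π) ∧
    (∀ Λ : Matrix (Fin n) (Fin n) ℂ →ₗ[ℂ] Matrix (Fin m) (Fin m) ℂ, IsCP Λ → IsTP Λ →
        ∀ ρ, Λ ρ = trA (choi Λ * (ρᵀ ⊗ₖ (1 : Matrix (Fin m) (Fin m) ℂ)))) := by
  refine ⟨fun Λ hCP hTP => ⟨posSemidef_choi hCP, trB_choi hTP⟩, fun π hπ htr => ?_,
    fun Λ _ _ ρ => by rw [trA_mul_transpose_kronecker_one, ofChoi_choi]⟩
  refine ⟨ofChoi π, ⟨⟨isCP_ofChoi hπ, isTP_ofChoi htr⟩, choi_ofChoi π⟩, ?_⟩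
  rintro Λ ⟨-, rfl⟩
  exact (ofChoi_choi Λ).symm
end
end

section
/- Let Φ : M_n(ℂ) → M_n(ℂ) be a positive trace-preserving linear map. Then Φ has a fixed point ρ_* which is a density matrix: there exists ρ_* ≥ 0 with Tr(ρ_*) = 1 and Φ(ρ_*) = ρ_*. -/
open Matrix
open scoped Kronecker ComplexOrder

noncomputable section

/-!
The density matrices form a compact convex set that Φ maps into itself, and for a *linear* map
this already yields a fixed point without Brouwer (Markov–Kakutani): the Cesàro averages
`A_N = (N + 1)⁻¹ ∑_{k ≤ N} Φ^k ρ₀` of an orbit stay in the set, and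
`Φ A_N - A_N = (Φ^{N+1} ρ₀ - ρ₀) / (N + 1)` tends to zero because the set is bounded,
so every limit point of the averages is fixed.
-/

open Filter Topology Function Set

namespace ContinuousLinearMap

variable {E : Type*} [NormedAddCommGroup E] [NormedSpace ℝ E]

def cesaroAverage (T : E →L[ℝ] E) (x : E) (N : ℕ) : E :=
  ((N : ℝ) + 1)⁻¹ • ∑ k ∈ Finset.range (N + 1), T^[k] x

lemma cesaroAverage_mem {K : Set E} (hK : Convex ℝ K) {T : E →L[ℝ] E} (hTK : MapsTo T K K)
    {x : E} (hx : x ∈ K) (N : ℕ) : cesaroAverage T x N ∈ K := by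
  rw [cesaroAverage, Finset.smul_sum]
  refine hK.sum_mem (fun _ _ => by positivity) ?_ fun k _ => hTK.iterate k hx
  rw [Finset.sum_const, Finset.card_range, nsmul_eq_mul]
  push_cast
  exact mul_inv_cancel₀ (by positivity)

lemma apply_cesaroAverage_sub (T : E →L[ℝ] E) (x : E) (N : ℕ) :
    T (cesaroAverage T x N) - cesaroAverage T x N = ((N : ℝ) + 1)⁻¹ • (T^[N + 1] x - x) := by
  rw [cesaroAverage, map_smul, map_sum, ← smul_sub, ← Finset.sum_sub_distrib]
  congr 1
  simp_rw [← iterate_succ_apply' T]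
  exact Finset.sum_range_sub (fun k => T^[k] x) (N + 1)

lemma tendsto_apply_cesaroAverage_sub {K : Set E} (hK : Bornology.IsBounded K) {T : E →L[ℝ] E}
    (hTK : MapsTo T K K) {x : E} (hx : x ∈ K) :
    Tendsto (fun N => T (cesaroAverage T x N) - cesaroAverage T x N) atTop (𝓝 0) := by
  simp_rw [apply_cesaroAverage_sub]
  obtain ⟨C, hC⟩ := hK.exists_norm_le
  have hinv : Tendsto (fun N : ℕ => ((N : ℝ) + 1)⁻¹) atTop (𝓝 0) := by
    simpa only [one_div] using tendsto_one_div_add_atTop_nhds_zero_nat (𝕜 := ℝ)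
  refine hinv.zero_smul_isBoundedUnder_le (isBoundedUnder_of ⟨C + C, fun N => ?_⟩)
  exact (norm_sub_le _ _).trans (add_le_add (hC _ (hTK.iterate _ hx)) (hC _ hx))

theorem exists_fixedPoint_of_mapsTo {K : Set E} (hKc : IsCompact K) (hKv : Convex ℝ K)
    {T : E →L[ℝ] E} (hTK : MapsTo T K K) {x : E} (hx : x ∈ K) : ∃ y ∈ K, T y = y := by
  obtain ⟨y, hyK, φ, hφ, hlim⟩ := hKc.tendsto_subseq (cesaroAverage_mem hKv hTK hx)
  have hdefect := (tendsto_apply_cesaroAverage_sub hKc.isBounded hTK hx).comp hφ.tendsto_atTop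
  exact ⟨y, hyK, sub_eq_zero.mp <|
    tendsto_nhds_unique (((T.continuous.tendsto y).comp hlim).sub hlim) hdefect⟩

end ContinuousLinearMap

attribute [local instance] Matrix.normedAddCommGroup Matrix.normedSpace

namespace Matrix

variable {ι 𝕜 : Type*} [RCLike 𝕜]

lemma PosSemidef.norm_apply_sq_le {A : Matrix ι ι 𝕜} (hA : A.PosSemidef) (i j : ι) :
    ((‖A i j‖ ^ 2 : ℝ) : 𝕜) ≤ A i i * A j j := by
  have hdet := (hA.submatrix ![i, j]).det_nonneg
  rw [det_fin_two] at hdet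
  simp only [submatrix_apply, cons_val_zero, cons_val_one] at hdet
  rw [← hA.1.apply i j, RCLike.star_def, RCLike.conj_mul] at hdet
  rw [← hA.1.apply i j, norm_star]
  exact_mod_cast sub_nonneg.mp hdet

variable [Fintype ι]

lemma isClosed_setOf_posSemidef : IsClosed {A : Matrix ι ι 𝕜 | A.PosSemidef} := by
  simp only [posSemidef_iff_dotProduct_mulVec, ofPred_and, ofPred_forall]
  exact (isClosed_eq continuous_id.matrix_conjTranspose continuous_id).inter
    (isClosed_iInter fun x => isClosed_le continuous_const
      (continuous_const.dotProduct (continuous_id.matrix_mulVec continuous_const)))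

variable (ι 𝕜) in
def densityMatrices : Set (Matrix ι ι 𝕜) := {ρ | ρ.PosSemidef ∧ ρ.trace = 1}

lemma norm_le_one_of_mem_densityMatrices {ρ : Matrix ι ι 𝕜} (hρ : ρ ∈ densityMatrices ι 𝕜) :
    ‖ρ‖ ≤ 1 := by
  have hdiag (i : ι) : ρ i i ≤ 1 :=
    hρ.2 ▸ Finset.single_le_sum (f := fun k => ρ k k) (fun _ _ => hρ.1.diag_nonneg)
      (Finset.mem_univ i)
  refine (norm_le_iff zero_le_one).mpr fun i j => ?_
  have hsq : ((‖ρ i j‖ ^ 2 : ℝ) : 𝕜) ≤ 1 :=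
    (hρ.1.norm_apply_sq_le i j).trans (mul_le_one₀ (hdiag i) hρ.1.diag_nonneg (hdiag j))
  exact (sq_le_one_iff₀ (norm_nonneg _)).mp (by exact_mod_cast hsq)

lemma isCompact_densityMatrices : IsCompact (densityMatrices ι 𝕜) :=
  Metric.isCompact_of_isClosed_isBounded
    (isClosed_setOf_posSemidef.inter (isClosed_eq continuous_id.matrix_trace continuous_const))
    ((Metric.isBounded_closedBall (x := 0) (r := 1)).subset fun _ hρ =>
      mem_closedBall_zero_iff.mpr (norm_le_one_of_mem_densityMatrices hρ))

lemma convex_densityMatrices : Convex ℝ (densityMatrices ι 𝕜) := by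
  intro ρ hρ σ hσ a b ha hb hab
  refine ⟨(hρ.1.smul ha).add (hσ.1.smul hb), ?_⟩
  rw [trace_add, trace_smul, trace_smul, hρ.2, hσ.2, ← add_smul, hab, one_smul]

lemma densityMatrices_nonempty [Nonempty ι] : (densityMatrices ι 𝕜).Nonempty := by
  classical
  obtain ⟨i⟩ := ‹Nonempty ι›
  refine ⟨diagonal (Pi.single i 1), PosSemidef.diagonal ?_, ?_⟩
  · exact Pi.single_nonneg.mpr zero_le_one
  · simp [trace_diagonal]

end Matrix

/-- quantum Perron–Frobenius fixed point theorem: every positive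
trace-preserving linear map has a density-matrix fixed point. -/
theorem quantum_perron_frobenius {n : ℕ} (hn : 0 < n)
    (Φ : Matrix (Fin n) (Fin n) ℂ →ₗ[ℂ] Matrix (Fin n) (Fin n) ℂ)
    (hpos : ∀ X : Matrix (Fin n) (Fin n) ℂ, X.PosSemidef → (Φ X).PosSemidef)
    (hTP : ∀ X, (Φ X).trace = X.trace) :
    ∃ ρ : Matrix (Fin n) (Fin n) ℂ, ρ.PosSemidef ∧ ρ.trace = 1 ∧ Φ ρ = ρ := by
  have : Nonempty (Fin n) := ⟨⟨0, hn⟩⟩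
  obtain ⟨ρ₀, hρ₀⟩ := densityMatrices_nonempty (ι := Fin n) (𝕜 := ℂ)
  let T : Matrix (Fin n) (Fin n) ℂ →L[ℝ] Matrix (Fin n) (Fin n) ℂ :=
    (Φ.restrictScalars ℝ).toContinuousLinearMap
  have hT : MapsTo T (densityMatrices (Fin n) ℂ) (densityMatrices (Fin n) ℂ) :=
    fun ρ hρ => ⟨hpos ρ hρ.1, (hTP ρ).trans hρ.2⟩
  obtain ⟨ρ, ⟨hρ, htr⟩, hfix⟩ := ContinuousLinearMap.exists_fixedPoint_of_mapsTo
    isCompact_densityMatrices convex_densityMatrices hT hρ₀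
  exact ⟨ρ, hρ, htr, hfix⟩
end
end

section
/- Let Λ : M_n(ℂ) → M_n(ℂ) be a quantum channel and T the transposition in the computational basis. Then there exists a density matrix ρ_* with Λ(ρ_*^T) = ρ_*, and the compound state ρ_{AB} = (ρ_*^{1/2} ⊗ I) π_{B|A} (ρ_*^{1/2} ⊗ I), where π_{B|A} is the Choi operator of Λ, is a broadcast of ρ_*: Tr_B(ρ_{AB}) = ρ_* and Tr_A(ρ_{AB}) = ρ_*. Hence every quantum channel broadcasts some state. -/
open Matrix
open scoped Kronecker ComplexOrder

noncomputable section

/-- The square root of a positive semidefinite matrix, as defined in Mathlib (Dec 2024). -/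
def Matrix.PosSemidef.sqrt {n𝕜 : Type*} {𝕜 : Type*} [Fintype n𝕜] [DecidableEq n𝕜] [RCLike 𝕜]
    {A : Matrix n𝕜 n𝕜 𝕜} (hA : A.PosSemidef) : Matrix n𝕜 n𝕜 𝕜 :=
  hA.1.eigenvectorUnitary.1 * diagonal ((↑) ∘ (√·) ∘ hA.1.eigenvalues) *
    (star hA.1.eigenvectorUnitary : Matrix n𝕜 n𝕜 𝕜)

/-! The map `Φ = Λ ∘ transpose` is positive and trace preserving. Trace preservation makes `1` an
eigenvalue of `Φ`, and positivity makes `Φ` commute with `ᴴ`, so `Φ` fixes a nonzero Hermitian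
`H`. If `P` is the spectral projection of `H` onto its positive part `H⁺ = P H P`, then
`Tr H⁺ = Tr (P Φ(H⁺) P) - Tr (P Φ(H⁻) P) ≤ Tr Φ(H⁺) = Tr H⁺`, which forces `Φ(H⁺) = H⁺`; so one
of `H⁺`, `H⁻` is a nonzero positive fixed point, and normalizing it gives `ρ`. The broadcast
identities are then Choi-operator computations: for trace-preserving `Λ`,
`Tr_B [(S ⊗ 1) π (T ⊗ 1)] = S T` and `Tr_A [(S ⊗ 1) π (T ⊗ 1)] = Λ ((T S)ᵀ)`. -/

open scoped MatrixOrder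

lemma IsStarProjection.mul_mul_eq_self_of_one_sub_mul_mul_eq_zero {A : Type*} [CStarAlgebra A]
    [PartialOrder A] [StarOrderedRing A] {a p : A} (ha : 0 ≤ a) (hp : IsStarProjection p)
    (h : (1 - p) * a * (1 - p) = 0) : p * a * p = a := by
  obtain ⟨b, rfl⟩ := CStarAlgebra.nonneg_iff_eq_star_mul_self.mp ha
  have hb : b * (1 - p) = 0 := by
    rw [← CStarRing.star_mul_self_eq_zero_iff, star_mul, hp.one_sub.isSelfAdjoint.star_eq, ← h]
    noncomm_ring
  have hbp : b * p = b := by rw [mul_sub, mul_one, sub_eq_zero] at hb; exact hb.symm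
  have hpb : p * star b = star b := by rw [← hp.isSelfAdjoint.star_eq, ← star_mul, hbp]
  rw [← mul_assoc, hpb, mul_assoc, hbp]

open ComplexStarModule in
lemma exists_isSelfAdjoint_ne_zero_apply_eq_self {E F : Type*} [AddCommGroup E] [Module ℂ E]
    [StarAddMonoid E] [StarModule ℂ E] [FunLike F E E] [StarHomClass F E E]
    [LinearMapClass F ℂ E E] (f : F) {x : E} (hx : x ≠ 0) (hfx : f x = x) :
    ∃ h : E, IsSelfAdjoint h ∧ h ≠ 0 ∧ f h = h := by
  by_cases hre : (ℜ x : E) = 0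
  · refine ⟨ℑ x, (ℑ x).2, fun him => hx ?_, by rw [map_imaginaryPart, hfx]⟩
    rw [← realPart_add_I_smul_imaginaryPart x, hre, him, smul_zero, add_zero]
  · exact ⟨ℜ x, (ℜ x).2, hre, by rw [map_realPart, hfx]⟩

namespace Matrix

variable {ι : Type*} [Fintype ι] [DecidableEq ι]

lemma PosSemidef.sqrt_mul_self {𝕜 : Type*} [RCLike 𝕜] {A : Matrix ι ι 𝕜} (hA : A.PosSemidef) :
    hA.sqrt * hA.sqrt = A := by
  have : hA.sqrt = CFC.sqrt A := by
    rw [CFC.sqrt_eq_real_sqrt A hA.nonneg, cfcₙ_eq_cfc, hA.1.cfc_eq, IsHermitian.cfc,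
      Unitary.conjStarAlgAut_apply]
    rfl
  rw [this, CFC.sqrt_mul_sqrt_self A hA.nonneg]

lemma exists_ne_zero_apply_eq_self_of_trace_apply [Nonempty ι] {R : Type*} [Field R]
    [CharZero R] (Φ : Matrix ι ι R →ₗ[R] Matrix ι ι R) (hΦ : ∀ X, (Φ X).trace = X.trace) :
    ∃ X : Matrix ι ι R, X ≠ 0 ∧ Φ X = X := by
  have hL : ¬ Function.Surjective (Φ - 1 : Module.End R (Matrix ι ι R)) := fun hs => by
    obtain ⟨X, hX⟩ := hs 1
    have := congrArg trace hX
    simp [trace_sub, hΦ, eq_comm] at this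
  rw [← LinearMap.injective_iff_surjective, ← LinearMap.ker_eq_bot] at hL
  obtain ⟨X, hX, hX0⟩ := Submodule.exists_mem_ne_zero_of_ne_bot hL
  exact ⟨X, hX0, sub_eq_zero.mp hX⟩

lemma trace_mul_mul_add_trace_one_sub_mul_mul {R : Type*} [CommRing R] {P : Matrix ι ι R}
    (hP : IsIdempotentElem P) (A : Matrix ι ι R) :
    (P * A * P).trace + ((1 - P) * A * (1 - P)).trace = A.trace := by
  rw [trace_mul_cycle, hP.eq, trace_mul_cycle (1 - P), hP.one_sub.eq, ← trace_add, ← add_mul,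
    add_sub_cancel, one_mul]

/-- `P` is the spectral projection onto the positive eigenvalues, so that `P * H * P = H⁺` and
`P * H * P - H = H⁻`. -/
lemma IsHermitian.exists_isStarProjection_posPart {H : Matrix ι ι ℂ} (hH : H.IsHermitian) :
    ∃ P : Matrix ι ι ℂ, IsStarProjection P ∧ 0 ≤ P * H * P ∧ 0 ≤ P * H * P - H := by
  set U := hH.eigenvectorUnitary
  set d := hH.eigenvalues
  let Q : Matrix ι ι ℂ := diagonal fun i => if 0 < d i then 1 else 0
  have hQ : IsStarProjection Q := by
    constructor
    · rw [IsIdempotentElem, diagonal_mul_diagonal]; congr 1; ext i; split_ifs <;> simp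
    · rw [IsSelfAdjoint, star_eq_conjTranspose, diagonal_conjTranspose]; congr 1; ext i; simp
  have hQDQ :
      Q * diagonal (RCLike.ofReal ∘ d) * Q = diagonal fun i => ((max (d i) 0 : ℝ) : ℂ) := by
    rw [diagonal_mul_diagonal, diagonal_mul_diagonal]; congr 1; ext i
    rcases lt_or_ge 0 (d i) with h | h <;> simp [h, le_of_lt]
  refine ⟨Unitary.conjStarAlgAut ℂ _ U Q, hQ.map _, ?_, ?_⟩
  · rw [hH.spectral_theorem, ← map_mul, ← map_mul, hQDQ]
    refine map_nonneg _ (nonneg_iff_posSemidef.mpr (posSemidef_diagonal_iff.mpr fun i => ?_))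
    positivity
  · rw [hH.spectral_theorem, ← map_mul, ← map_mul, ← map_sub, hQDQ, diagonal_sub]
    refine map_nonneg _ (nonneg_iff_posSemidef.mpr (posSemidef_diagonal_iff.mpr fun i => ?_))
    simp [d]

end Matrix

namespace PositiveLinearMap

variable {ι : Type*} [Fintype ι] [DecidableEq ι] (Φ : Matrix ι ι ℂ →ₚ[ℂ] Matrix ι ι ℂ)

-- `Matrix ι ι ℂ` is a C⋆-algebra only under this scoped instance.
open scoped Matrix.Norms.L2Operator in
lemma apply_posPart_eq_self (hΦ : ∀ X, (Φ X).trace = X.trace) {H P : Matrix ι ι ℂ}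
    (hP : IsStarProjection P) (hpos : 0 ≤ P * H * P) (hneg : 0 ≤ P * H * P - H)
    (hH : Φ H = H) : Φ (P * H * P) = P * H * P := by
  set A := Φ (P * H * P)
  set B := Φ (P * H * P - H)
  have hAB : P * H * P = P * A * P - P * B * P := by
    rw [← show A - B = H by rw [← map_sub, sub_sub_cancel, hH]]; noncomm_ring
  have hRA : 0 ≤ (1 - P) * A * (1 - P) := by
    have := star_left_conjugate_nonneg (map_nonneg Φ hpos) (1 - P)
    rwa [hP.one_sub.isSelfAdjoint.star_eq] at this
  have hPB : 0 ≤ P * B * P := by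
    have := star_left_conjugate_nonneg (map_nonneg Φ hneg) P
    rwa [hP.isSelfAdjoint.star_eq] at this
  have htrace : ((1 - P) * A * (1 - P)).trace + (P * B * P).trace = 0 := by
    have hsplit := Matrix.trace_mul_mul_add_trace_one_sub_mul_mul hP.isIdempotentElem A
    have hcompress : (P * H * P).trace = (P * A * P).trace - (P * B * P).trace := by
      rw [hAB, Matrix.trace_sub]
    linear_combination hsplit + hΦ (P * H * P) + hcompress
  obtain ⟨hRA0, hPB0⟩ := (add_eq_zero_iff_of_nonneg hRA.posSemidef.trace_nonneg
    hPB.posSemidef.trace_nonneg).mp htrace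
  rw [hRA.posSemidef.trace_eq_zero_iff] at hRA0
  rw [hPB.posSemidef.trace_eq_zero_iff] at hPB0
  rw [hAB, hPB0, sub_zero,
    hP.mul_mul_eq_self_of_one_sub_mul_mul_eq_zero (map_nonneg Φ hpos) hRA0]

lemma exists_nonneg_ne_zero_apply_eq_self [Nonempty ι] (hΦ : ∀ X, (Φ X).trace = X.trace) :
    ∃ σ : Matrix ι ι ℂ, 0 ≤ σ ∧ σ ≠ 0 ∧ Φ σ = σ := by
  obtain ⟨X, hX0, hX⟩ := Matrix.exists_ne_zero_apply_eq_self_of_trace_apply Φ.toLinearMap hΦ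
  obtain ⟨H, hH, hH0, hΦH⟩ := exists_isSelfAdjoint_ne_zero_apply_eq_self Φ hX0 hX
  obtain ⟨P, hP, hpos, hneg⟩ := hH.isHermitian.exists_isStarProjection_posPart
  have hΦpos := Φ.apply_posPart_eq_self hΦ hP hpos hneg hΦH
  by_cases hpos0 : P * H * P = 0
  · refine ⟨P * H * P - H, hneg, by simpa [hpos0] using hH0, ?_⟩
    rw [map_sub, hΦpos, hΦH]
  · exact ⟨P * H * P, hpos, hpos0, hΦpos⟩

lemma exists_density_apply_eq_self [Nonempty ι] (hΦ : ∀ X, (Φ X).trace = X.trace) :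
    ∃ ρ : Matrix ι ι ℂ, 0 ≤ ρ ∧ ρ.trace = 1 ∧ Φ ρ = ρ := by
  obtain ⟨σ, hσ, hσ0, hΦσ⟩ := Φ.exists_nonneg_ne_zero_apply_eq_self hΦ
  have htr : σ.trace ≠ 0 := fun h => hσ0 (hσ.posSemidef.trace_eq_zero_iff.mp h)
  refine ⟨σ.trace⁻¹ • σ, smul_nonneg (inv_nonneg.mpr hσ.posSemidef.trace_nonneg) hσ, ?_, ?_⟩
  · rw [Matrix.trace_smul, smul_eq_mul, inv_mul_cancel₀ htr]
  · rw [map_smul, hΦσ]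

end PositiveLinearMap

-- `matMap Λ` of the `Fin 1`-inflation of `X` is definitionally the inflation of `Λ X`.
lemma IsCP.posSemidef_apply {n m : ℕ}
    {Λ : Matrix (Fin n) (Fin n) ℂ →ₗ[ℂ] Matrix (Fin m) (Fin m) ℂ} (hΛ : IsCP Λ)
    {X : Matrix (Fin n) (Fin n) ℂ} (hX : X.PosSemidef) : (Λ X).PosSemidef :=
  (posSemidef_submatrix_equiv (Equiv.uniqueProd (Fin m) (Fin 1))).mp
    (hΛ 1 (X.submatrix Prod.snd Prod.snd) (hX.submatrix _))

section Broadcast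

variable {n m : ℕ}

lemma trB_sum {ι : Type*} (s : Finset ι) (f : ι → Matrix (Fin n × Fin m) (Fin n × Fin m) ℂ) :
    trB (∑ i ∈ s, f i) = ∑ i ∈ s, trB (f i) := by
  ext a b
  simp only [trB, of_apply, Matrix.sum_apply]
  exact Finset.sum_comm

lemma trA_sum {ι : Type*} (s : Finset ι) (f : ι → Matrix (Fin n × Fin m) (Fin n × Fin m) ℂ) :
    trA (∑ i ∈ s, f i) = ∑ i ∈ s, trA (f i) := by
  ext a b
  simp only [trA, of_apply, Matrix.sum_apply]
  exact Finset.sum_comm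

lemma trB_kronecker (A : Matrix (Fin n) (Fin n) ℂ) (B : Matrix (Fin m) (Fin m) ℂ) :
    trB (A ⊗ₖ B) = B.trace • A := by
  ext i j
  simp only [trB, of_apply, kroneckerMap_apply, Matrix.smul_apply, trace, diag, smul_eq_mul,
    Finset.mul_sum, mul_comm]

lemma trA_kronecker (A : Matrix (Fin n) (Fin n) ℂ) (B : Matrix (Fin m) (Fin m) ℂ) :
    trA (A ⊗ₖ B) = A.trace • B := by
  ext a b
  simp only [trA, of_apply, kroneckerMap_apply, Matrix.smul_apply, trace, diag, smul_eq_mul,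
    Finset.sum_mul]

variable (Λ : Matrix (Fin n) (Fin n) ℂ →ₗ[ℂ] Matrix (Fin m) (Fin m) ℂ)

lemma kronecker_one_mul_choi_mul (S T : Matrix (Fin n) (Fin n) ℂ) :
    (S ⊗ₖ (1 : Matrix (Fin m) (Fin m) ℂ)) * choi Λ * (T ⊗ₖ 1) =
      ∑ i, ∑ j, (S * single i j 1 * T) ⊗ₖ Λ (single i j 1) := by
  simp only [choi, Finset.mul_sum, Finset.sum_mul, ← mul_kronecker_mul, mul_one, one_mul]

lemma trB_kronecker_one_mul_choi_mul (hΛ : IsTP Λ) (S T : Matrix (Fin n) (Fin n) ℂ) :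
    trB ((S ⊗ₖ (1 : Matrix (Fin m) (Fin m) ℂ)) * choi Λ * (T ⊗ₖ 1)) = S * T := by
  have hdiag (i : Fin n) :
      ∑ j, (single i j (1 : ℂ)).trace • (S * single i j 1 * T) = S * single i i 1 * T := by
    rw [Fintype.sum_eq_single i fun j hj => by rw [trace_single_eq_of_ne _ _ _ hj.symm, zero_smul],
      trace_single_eq_same, one_smul]
  simp only [kronecker_one_mul_choi_mul, trB_sum, trB_kronecker, hΛ _, hdiag]
  rw [← Finset.sum_mul, ← Finset.mul_sum, sum_single_one, mul_one]

lemma trA_kronecker_one_mul_choi_mul (S T : Matrix (Fin n) (Fin n) ℂ) :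
    trA ((S ⊗ₖ (1 : Matrix (Fin m) (Fin m) ℂ)) * choi Λ * (T ⊗ₖ 1)) = Λ (T * S)ᵀ := by
  have htrace (i j : Fin n) : (S * single i j (1 : ℂ) * T).trace = (T * S) j i := by
    rw [trace_mul_cycle, trace_mul_single]; simp
  simp only [kronecker_one_mul_choi_mul, trA_sum, trA_kronecker, htrace]
  conv_rhs => rw [matrix_eq_sum_single (T * S)ᵀ]
  simp only [map_sum, transpose_apply, ← map_smul, smul_single, smul_eq_mul, mul_one]

end Broadcast

/-- every quantum channel broadcasts some state: there is a density
matrix `ρ_*` with `Λ(ρ_*ᵀ) = ρ_*`, and the compound state built from the Choi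
operator is a broadcast of `ρ_*`. -/
theorem every_channel_broadcasts {n : ℕ} (hn : 0 < n)
    (Λ : Matrix (Fin n) (Fin n) ℂ →ₗ[ℂ] Matrix (Fin n) (Fin n) ℂ)
    (hCP : IsCP Λ) (hTP : IsTP Λ) :
    ∃ ρ : Matrix (Fin n) (Fin n) ℂ, ∃ hρ : ρ.PosSemidef, ρ.trace = 1 ∧ Λ ρᵀ = ρ ∧
      trB ((hρ.sqrt ⊗ₖ (1 : Matrix (Fin n) (Fin n) ℂ)) * choi Λ *
        (hρ.sqrt ⊗ₖ (1 : Matrix (Fin n) (Fin n) ℂ))) = ρ ∧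
      trA ((hρ.sqrt ⊗ₖ (1 : Matrix (Fin n) (Fin n) ℂ)) * choi Λ *
        (hρ.sqrt ⊗ₖ (1 : Matrix (Fin n) (Fin n) ℂ))) = ρ := by
  have : Nonempty (Fin n) := Fin.pos_iff_nonempty.mp hn
  let Φ : Matrix (Fin n) (Fin n) ℂ →ₚ[ℂ] Matrix (Fin n) (Fin n) ℂ :=
    .mk₀ (Λ ∘ₗ (transposeLinearEquiv (Fin n) (Fin n) ℂ ℂ).toLinearMap) fun X hX =>
      (hCP.posSemidef_apply hX.posSemidef.transpose).nonneg
  obtain ⟨ρ, hρ, hρ_trace, hΦρ⟩ :=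
    Φ.exists_density_apply_eq_self fun X => (hTP Xᵀ).trans X.trace_transpose
  refine ⟨ρ, hρ.posSemidef, hρ_trace, hΦρ, ?_, ?_⟩
  · rw [trB_kronecker_one_mul_choi_mul Λ hTP, hρ.posSemidef.sqrt_mul_self]
  · rw [trA_kronecker_one_mul_choi_mul, hρ.posSemidef.sqrt_mul_self]
    exact hΦρ
end
end
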